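/- arXiv:2012.00889 — 3 statements merged into one kernel-verified Lean document; each statement's English description precedes it below -/
import Mathlib

section
/- With α and β as above, for all 1 ≤ t ≤ L−1 the quantity (1/Z)·α_t(s)·T(s'|s,a)·exp(γ^{t−1}R(s,a)+γ^{t−1}R(s,a,s'))·∑_{l=t+1}^{L} β_{l,l−t}(s') equals the probability, under the globally normalized Gibbs distribution p(τ) = q(τ)e^{R(τ)}/Z over trajectories of lengths 1 to L, that a trajectory has length at least t+1 and its t-th transition is (s,a,s'). -/
/-!
The Gibbs weight of a trajectory factors as `p0(σ₀) e^{R1(σ₀)}` times a product of step weights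
`g_t(x, b, y) = T(y | x, b) · exp(γ^t (R2(x, b) + R3(x, b, y)) + γ^{t+1} R1(y))`, so the forward
messages are the forward path sums of `g` and the backward messages are, up to the factor
`e^{γ^d R1}` of their first state, the backward path sums of the shifted `g`. Pinning the
`t`-th transition to `(s, a, s')` replaces `g_t` by its restriction to that triple; splitting a
path at that step turns the pinned path sum into
`(forward sum up to s) · g_t(s, a, s') · (backward sum from s')`; the split rests on the duality
`∑_y (forward sum from w)(y) = ∑_x w(x) · (backward sum)(x)`. Summing over lengths gives the
marginal.
-/

theorem sum_Icc_eq_sum_range_ite {M : Type*} [AddCommMonoid M] (f : ℕ → M) (i L : ℕ) :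
    ∑ l ∈ Finset.Icc (i + 2) L, f l = ∑ n ∈ Finset.range L, if i < n then f (n + 1) else 0 := by
  have hfilter : (Finset.range L).filter (i < ·) = Finset.Ico (i + 1) L := by
    ext n
    simp only [Finset.mem_filter, Finset.mem_range, Finset.mem_Ico]
    omega
  rw [← Finset.sum_filter, hfilter, ← Finset.Ico_add_one_right_eq_Icc, Finset.sum_Ico_add']

section PathSums

variable {S A R : Type*} [CommSemiring R]

section

variable [Fintype S] [Fintype A]

def forwardSum (w : S → R) (g : ℕ → S → A → S → R) : ℕ → S → R
  | 0 => w
  | n + 1 => fun y => ∑ x, ∑ b, forwardSum w g n x * g n x b y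

def backwardSum (g : ℕ → S → A → S → R) : ℕ → S → R
  | 0, _ => 1
  | k + 1, x => ∑ b, ∑ y, g 0 x b y * backwardSum (fun t => g (t + 1)) k y

theorem eq_forwardSum_of_recursion {w : S → R} {g : ℕ → S → A → S → R} {f : ℕ → S → R}
    (h0 : f 0 = w) (hsucc : ∀ n y, f (n + 1) y = ∑ x, ∑ b, f n x * g n x b y) (n : ℕ) :
    f n = forwardSum w g n := by
  induction n with
  | zero => exact h0
  | succ n ih => funext y; rw [hsucc, ih]; rfl

theorem forwardSum_add (w : S → R) (g : ℕ → S → A → S → R) (m k : ℕ) :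
    forwardSum w g (m + k) = forwardSum (forwardSum w g m) (fun t => g (m + t)) k := by
  induction k with
  | zero => rfl
  | succ k ih =>
    funext y
    change ∑ x, ∑ b, forwardSum w g (m + k) x * g (m + k) x b y = _
    rw [ih]
    rfl

theorem forwardSum_congr {w : S → R} {g g' : ℕ → S → A → S → R} {n : ℕ}
    (h : ∀ t < n, g t = g' t) : forwardSum w g n = forwardSum w g' n := by
  induction n with
  | zero => rfl
  | succ n ih =>
    funext y
    simp only [forwardSum, ih fun t ht => h t (by omega), h n (by omega)]

theorem sum_forwardSum_eq_sum_mul_backwardSum (w : S → R) (g : ℕ → S → A → S → R) (k : ℕ) :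
    ∑ y, forwardSum w g k y = ∑ x, w x * backwardSum g k x := by
  induction k generalizing w g with
  | zero => simp [forwardSum, backwardSum]
  | succ k ih =>
    have hshift : (fun t => g (1 + t)) = fun t => g (t + 1) := by simp only [add_comm]
    have hsplit := forwardSum_add w g 1 k
    rw [add_comm 1 k] at hsplit
    rw [hsplit, ih, hshift]
    simp only [forwardSum, backwardSum, Finset.sum_mul, Finset.mul_sum, mul_assoc]
    rw [Finset.sum_comm]
    refine Finset.sum_congr rfl fun x _ => ?_
    rw [Finset.sum_comm]

theorem sum_paths_eq_sum_mul_backwardSum (w : S → R) (g : ℕ → S → A → S → R) (n : ℕ) :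
    ∑ σ : Fin (n + 1) → S, ∑ as : Fin n → A,
        w (σ 0) * ∏ t : Fin n, g t (σ t.castSucc) (as t) (σ t.succ) =
      ∑ x, w x * backwardSum g n x := by
  induction n generalizing w g with
  | zero => simpa [backwardSum] using (Equiv.funUnique (Fin 1) S).sum_comp w
  | succ n ih =>
    rw [← (Fin.consEquiv fun _ => S).sum_comp, Fintype.sum_prod_type]
    simp only [Fin.consEquiv_apply]
    conv_lhs =>
      enter [2, x, 2, σ]
      rw [← (Fin.consEquiv fun _ => A).sum_comp, Fintype.sum_prod_type]
    simp only [Fin.consEquiv_apply, Fin.prod_univ_succ, Fin.cons_zero, Fin.castSucc_zero,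
      ← Fin.succ_castSucc, Fin.cons_succ, Fin.val_succ]
    refine Finset.sum_congr rfl fun x _ => ?_
    rw [Finset.sum_comm, backwardSum, Finset.mul_sum]
    refine Finset.sum_congr rfl fun b _ => ?_
    simp only [← ih (g 0 x b) (fun t => g (t + 1)), Finset.mul_sum, Fin.val_zero]

end

variable [DecidableEq S] [DecidableEq A]

def pinStep (g : ℕ → S → A → S → R) (i : ℕ) (s : S) (a : A) (s' : S) :
    ℕ → S → A → S → R :=
  Function.update g i fun x b y => if x = s ∧ b = a ∧ y = s' then g i x b y else 0

theorem prod_pinStep (g : ℕ → S → A → S → R) {i n : ℕ} (h : i < n) (s : S) (a : A) (s' : S)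
    (σ : Fin (n + 1) → S) (as : Fin n → A) :
    ∏ t : Fin n, pinStep g i s a s' t (σ t.castSucc) (as t) (σ t.succ) =
      if σ ⟨i, Nat.lt_succ_of_lt h⟩ = s ∧ as ⟨i, h⟩ = a ∧ σ ⟨i + 1, Nat.succ_lt_succ h⟩ = s' then
        ∏ t : Fin n, g t (σ t.castSucc) (as t) (σ t.succ)
      else 0 := by
  have hoff : ∀ t ∈ ({⟨i, h⟩}ᶜ : Finset (Fin n)),
      pinStep g i s a s' t (σ t.castSucc) (as t) (σ t.succ) =
        g t (σ t.castSucc) (as t) (σ t.succ) := by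
    intro t ht
    have hti : (t : ℕ) ≠ i := fun hti => by simp [Fin.ext_iff, hti] at ht
    simp only [pinStep, Function.update_of_ne hti]
  rw [Fintype.prod_eq_mul_prod_compl ⟨i, h⟩, Finset.prod_congr rfl hoff,
    Fintype.prod_eq_mul_prod_compl ⟨i, h⟩]
  simp only [pinStep, Function.update_self, Fin.castSucc_mk, Fin.succ_mk]
  split_ifs <;> simp

variable [Fintype S] [Fintype A]

theorem sum_forwardSum_pinStep (w : S → R) (g : ℕ → S → A → S → R) (i k : ℕ) (s : S) (a : A)
    (s' : S) :
    ∑ y, forwardSum w (pinStep g i s a s') (i + 1 + k) y =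
      forwardSum w g i s * g i s a s' * backwardSum (fun t => g (i + 1 + t)) k s' := by
  have hafter : (fun t => pinStep g i s a s' (i + 1 + t)) = fun t => g (i + 1 + t) := by
    funext t
    exact Function.update_of_ne (by omega) _ _
  have hbefore : forwardSum w (pinStep g i s a s') i = forwardSum w g i :=
    forwardSum_congr fun t ht => Function.update_of_ne (by omega) _ _
  have hpinned : ∀ y, forwardSum w (pinStep g i s a s') (i + 1) y =
      if y = s' then forwardSum w g i s * g i s a s' else 0 := by
    intro y
    change ∑ x, ∑ b, forwardSum w (pinStep g i s a s') i x * pinStep g i s a s' i x b y = _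
    rw [hbefore]
    simp only [pinStep, Function.update_self, mul_ite, mul_zero, ite_and]
    split_ifs <;> simp [*]
  rw [forwardSum_add, sum_forwardSum_eq_sum_mul_backwardSum, hafter]
  simp only [hpinned, ite_mul, zero_mul, Finset.sum_ite_eq', Finset.mem_univ, if_true]

theorem sum_pinned_paths (w : S → R) (g : ℕ → S → A → S → R) (i k : ℕ) (s : S) (a : A)
    (s' : S) :
    ∑ σ : Fin (i + 1 + k + 1) → S, ∑ as : Fin (i + 1 + k) → A,
        (if σ ⟨i, by omega⟩ = s ∧ as ⟨i, by omega⟩ = a ∧ σ ⟨i + 1, by omega⟩ = s' then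
          w (σ 0) * ∏ t : Fin (i + 1 + k), g t (σ t.castSucc) (as t) (σ t.succ)
        else 0) =
      forwardSum w g i s * g i s a s' * backwardSum (fun t => g (i + 1 + t)) k s' := by
  have hw : i < i + 1 + k := by omega
  simp only [← mul_ite_zero, ← prod_pinStep g hw]
  rw [sum_paths_eq_sum_mul_backwardSum, ← sum_forwardSum_eq_sum_mul_backwardSum,
    sum_forwardSum_pinStep]

end PathSums

section GibbsTrajectories

variable {S A : Type*} (T : S → A → S → ℝ) (γ : ℝ) (R1 : S → ℝ) (R2 : S → A → ℝ)
  (R3 : S → A → S → ℝ)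

noncomputable def stepWeight (t : ℕ) (x : S) (b : A) (y : S) : ℝ :=
  T x b y * Real.exp (γ ^ t * R2 x b + γ ^ t * R3 x b y + γ ^ (t + 1) * R1 y)

theorem trajectory_weight_eq_prod_stepWeight (p0 : S → ℝ) {n : ℕ} (σ : Fin (n + 1) → S)
    (as : Fin n → A) :
    (p0 (σ 0) * ∏ t : Fin n, T (σ t.castSucc) (as t) (σ t.succ)) *
        Real.exp ((∑ t : Fin (n + 1), γ ^ (t : ℕ) * R1 (σ t)) +
          ∑ t : Fin n, γ ^ (t : ℕ) *
            (R2 (σ t.castSucc) (as t) + R3 (σ t.castSucc) (as t) (σ t.succ))) =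
      p0 (σ 0) * Real.exp (R1 (σ 0)) *
        ∏ t : Fin n, stepWeight T γ R1 R2 R3 t (σ t.castSucc) (as t) (σ t.succ) := by
  rw [Fin.sum_univ_succ, add_assoc, add_comm (∑ t : Fin n, _), ← Finset.sum_add_distrib,
    Real.exp_add, Real.exp_sum]
  simp only [stepWeight, Finset.prod_mul_distrib, Fin.val_zero, pow_zero, one_mul, Fin.val_succ,
    mul_add]
  ring

variable [Fintype S] [Fintype A]

theorem backward_eq_exp_mul_backwardSum (β : ℕ → ℕ → S → ℝ)
    (hβbase : ∀ l, 1 ≤ l → ∀ s, β l 1 s = Real.exp (γ ^ (l - 1) * R1 s))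
    (hβrec : ∀ l t, 1 ≤ t → t + 1 ≤ l → ∀ s, β l (t + 1) s =
      ∑ a, ∑ s', T s a s' *
        Real.exp (γ ^ (l - t - 1) * (R1 s + R2 s a + R3 s a s')) * β l t s')
    (k d : ℕ) (x : S) :
    β (k + 1 + d) (k + 1) x =
      Real.exp (γ ^ d * R1 x) * backwardSum (fun t => stepWeight T γ R1 R2 R3 (d + t)) k x := by
  induction k generalizing d x with
  | zero => simp [hβbase, backwardSum]
  | succ k ih =>
    rw [show k + 1 + 1 + d = k + 1 + (d + 1) by omega, hβrec _ _ (by omega) (by omega),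
      show k + 1 + (d + 1) - (k + 1) - 1 = d by omega]
    have hshift : (fun t => stepWeight T γ R1 R2 R3 (d + (t + 1))) =
        fun t => stepWeight T γ R1 R2 R3 (d + 1 + t) := by
      funext t
      rw [add_comm t, add_assoc]
    rw [backwardSum, hshift]
    simp only [ih, Finset.mul_sum, stepWeight, add_zero]
    refine Finset.sum_congr rfl fun b _ => Finset.sum_congr rfl fun y _ => ?_
    have hexp : Real.exp (γ ^ d * (R1 x + R2 x b + R3 x b y)) * Real.exp (γ ^ (d + 1) * R1 y) =
        Real.exp (γ ^ d * R1 x) *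
          Real.exp (γ ^ d * R2 x b + γ ^ d * R3 x b y + γ ^ (d + 1) * R1 y) := by
      rw [← Real.exp_add, ← Real.exp_add]
      ring_nf
    linear_combination
      (T x b y * backwardSum (fun t => stepWeight T γ R1 R2 R3 (d + 1 + t)) k y) * hexp

end GibbsTrajectories

/-- The forward-backward expression for the transition marginal is exact: for
`1 ≤ t ≤ L-1` (here `t = i+1`, zero-based transition index `i`), the quantity
`(1/Z)·α_t(s)·T(s'|s,a)·exp(γ^{t-1}R(s,a)+γ^{t-1}R(s,a,s'))·∑_{l=t+1}^{L} β_{l,l-t}(s')`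
equals the probability, under the globally normalized Gibbs distribution
`p(τ) = q(τ)e^{R(τ)}/Z` over trajectories of lengths 1 to L, that a trajectory has
length at least `t+1` and its `t`-th transition is `(s,a,s')`.
`α n` represents `α_{n+1}` in 1-based notation; `β l t` uses the paper's indexing. -/
theorem forward_backward_marginal_exact {S A : Type*} [Fintype S] [Fintype A]
    [DecidableEq S] [DecidableEq A]
    (p0 : S → ℝ) (T : S → A → S → ℝ) (γ : ℝ)
    (R1 : S → ℝ) (R2 : S → A → ℝ) (R3 : S → A → S → ℝ)
    (α : ℕ → S → ℝ)
    (hαbase : ∀ s, α 0 s = p0 s * Real.exp (R1 s))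
    (hαrec : ∀ n s', α (n + 1) s' = ∑ s, ∑ a, α n s * T s a s' *
      Real.exp (γ ^ n * R2 s a + γ ^ n * R3 s a s' + γ ^ (n + 1) * R1 s'))
    (β : ℕ → ℕ → S → ℝ)
    (hβbase : ∀ l, 1 ≤ l → ∀ s, β l 1 s = Real.exp (γ ^ (l - 1) * R1 s))
    (hβrec : ∀ l t, 1 ≤ t → t + 1 ≤ l → ∀ s, β l (t + 1) s =
      ∑ a, ∑ s', T s a s' *
        Real.exp (γ ^ (l - t - 1) * (R1 s + R2 s a + R3 s a s')) * β l t s')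
    (L : ℕ) (Z : ℝ)
    (i : ℕ) (s : S) (a : A) (s' : S) :
    (1 / Z) * (α i s * T s a s' *
        Real.exp (γ ^ i * R2 s a + γ ^ i * R3 s a s') *
        ∑ l ∈ Finset.Icc (i + 2) L, β l (l - (i + 1)) s') =
      ∑ n ∈ Finset.range L, ∑ σ : Fin (n + 1) → S, ∑ as : Fin n → A,
        (if h : i < n then
          (if σ ⟨i, by omega⟩ = s ∧ as ⟨i, h⟩ = a ∧ σ ⟨i + 1, by omega⟩ = s' then
            ((p0 (σ 0) * ∏ t : Fin n, T (σ t.castSucc) (as t) (σ t.succ)) *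
              Real.exp ((∑ t : Fin (n + 1), γ ^ (t : ℕ) * R1 (σ t)) +
                ∑ t : Fin n, γ ^ (t : ℕ) *
                  (R2 (σ t.castSucc) (as t) + R3 (σ t.castSucc) (as t) (σ t.succ)))) / Z
          else 0)
        else 0) := by
  set g := stepWeight T γ R1 R2 R3
  set w : S → ℝ := fun x => p0 x * Real.exp (R1 x)
  have hα : α i = forwardSum w g i :=
    eq_forwardSum_of_recursion (funext hαbase)
      (fun n y => by simp only [hαrec, g, stepWeight, mul_assoc]) i
  rw [sum_Icc_eq_sum_range_ite, Finset.mul_sum, Finset.mul_sum]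
  refine Finset.sum_congr rfl fun n _ => ?_
  by_cases h : i < n
  · obtain ⟨k, rfl⟩ : ∃ k, n = i + 1 + k := ⟨n - i - 1, by omega⟩
    have hfb : α i s * T s a s' * Real.exp (γ ^ i * R2 s a + γ ^ i * R3 s a s') *
        β (i + 1 + k + 1) (i + 1 + k + 1 - (i + 1)) s' =
          forwardSum w g i s * g i s a s' * backwardSum (fun t => g (i + 1 + t)) k s' := by
      rw [hα, show i + 1 + k + 1 - (i + 1) = k + 1 by omega,
        show i + 1 + k + 1 = k + 1 + (i + 1) by omega,
        backward_eq_exp_mul_backwardSum T γ R1 R2 R3 β hβbase hβrec]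
      simp only [g, stepWeight, Real.exp_add]
      ring
    rw [if_pos h, hfb, ← sum_pinned_paths, Finset.mul_sum]
    refine Finset.sum_congr rfl fun σ _ => ?_
    rw [Finset.mul_sum]
    refine Finset.sum_congr rfl fun as _ => ?_
    rw [dif_pos h, trajectory_weight_eq_prod_stepWeight]
    split_ifs
    · simp only [w, g]
      ring
    · rw [mul_zero]
  · simp [h]
end

section
/- Padding invariance: for a trajectory τ of length l ≤ L in the original episodic MDP, let τ⁺ be the trajectory of length L obtained by appending (a_a, s_a) pairs until length L in the padded MDP. Then q⁺(τ⁺)·exp(R⁺(τ⁺)) = q(τ)·exp(R(τ)), where q⁺ and R⁺ are the dynamics weight and discounted reward in the padded MDP. Consequently, the partition function over fixed-length-L padded trajectories equals the partition function over variable-length (1 ≤ l ≤ L) original trajectories. -/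
/-!
Padding appends only steps `(s, a_a, s_a)` and `(s_a, a_a, s_a)`, which have dynamics weight `1`
and reward `0`, so it preserves the weight `q(τ) e^{R(τ)}`; a trajectory passing through a
terminal state before its end has weight `0` on both sides. Conversely, a padded trajectory of
non-zero weight starts in `S`, never returns from `s_a`, and takes `a_a` exactly when it moves
to `s_a`, so it is the padding of a unique original trajectory. Both partition functions are
therefore sums of the same weights over index sets in bijection, up to terms that vanish.
-/

open Finset

section Padding

variable {α β : Type*} {m n : ℕ}

def padNone (f : Fin m → α) : Fin n → Option α :=
  fun k => if h : (k : ℕ) < m then some (f ⟨k, h⟩) else none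

@[simp]
lemma padNone_castLE (h : m ≤ n) (f : Fin m → α) (k : Fin m) :
    padNone f (k.castLE h) = some (f k) := by
  simp [padNone]

@[simp]
lemma padNone_eq_none_iff {f : Fin m → α} {k : Fin n} : padNone f k = none ↔ m ≤ k := by
  simp [padNone]

@[simp]
lemma padNone_zero (f : Fin (m + 1) → α) : padNone f (0 : Fin (n + 1)) = some (f 0) := by
  simp [padNone]

lemma padNone_of_le {f : Fin m → α} {k : Fin n} (h : m ≤ k) : padNone f k = none :=
  padNone_eq_none_iff.2 h

lemma padNone_injective (h : m ≤ n) :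
    Function.Injective (padNone : (Fin m → α) → Fin n → Option α) := fun f g hfg ↦
  funext fun k ↦ by simpa using congrFun hfg (k.castLE h)

lemma exists_padNone_eq (h : m ≤ n) {g : Fin n → Option α} (hg : ∀ k, g k = none ↔ m ≤ k) :
    ∃ f : Fin m → α, padNone f = g := by
  have hsome (j : Fin m) : (g (j.castLE h)).isSome := by
    simp [Option.isSome_iff_ne_none, hg]
  refine ⟨fun j ↦ (g (j.castLE h)).get (hsome j), funext fun k ↦ ?_⟩
  by_cases hk : (k : ℕ) < m
  · simp [padNone, hk]
  · simp [padNone, hk, ((hg k).2 (not_lt.1 hk))]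

lemma exists_padNone_eq_of_absorbing {σ : Fin (n + 1) → Option α} (h0 : σ 0 ≠ none)
    (hσ : ∀ k : Fin n, σ k.castSucc = none → σ k.succ = none) :
    ∃ (m : Fin (n + 1)) (τ : Fin (m + 1) → α), padNone τ = σ := by
  have hmono : Monotone fun k ↦ σ k = none := Fin.monotone_iff_le_succ.2 hσ
  let D := univ.filter fun k ↦ σ k ≠ none
  have hD : D.Nonempty := ⟨0, by simpa [D] using h0⟩
  refine ⟨D.max' hD, exists_padNone_eq (D.max' hD).isLt fun k ↦ ⟨fun hk ↦ ?_, fun hk ↦ ?_⟩⟩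
  · by_contra! hlt
    exact (mem_filter.1 (D.max'_mem hD)).2 (hmono (Fin.le_iff_val_le_val.2 (by omega)) hk)
  · by_contra hk'
    have := D.le_max' k (by simpa [D] using hk')
    rw [Fin.le_iff_val_le_val] at this
    omega

lemma exists_padNone_pair_eq {σ : Fin (n + 1) → Option α} {b : Fin n → Option β}
    (h0 : σ 0 ≠ none) (hσ : ∀ k : Fin n, σ k.castSucc = none → σ k.succ = none)
    (hb : ∀ k : Fin n, b k = none ↔ σ k.succ = none) :
    ∃ (m : Fin (n + 1)) (τ : Fin (m + 1) → α) (a : Fin m → β),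
      padNone τ = σ ∧ padNone a = b := by
  obtain ⟨m, τ, rfl⟩ := exists_padNone_eq_of_absorbing h0 hσ
  obtain ⟨a, rfl⟩ := exists_padNone_eq (Nat.lt_succ_iff.1 m.isLt) (g := b) fun k ↦ by simp [hb]
  exact ⟨m, τ, a, rfl, rfl⟩

lemma padNone_sigma_injective :
    Function.Injective fun x : Σ m : Fin (n + 1), (Fin (m + 1) → α) × (Fin m → β) ↦
      ((padNone x.2.1 : Fin (n + 1) → Option α), (padNone x.2.2 : Fin n → Option β)) := by
  rintro ⟨m₁, τ₁, a₁⟩ ⟨m₂, τ₂, a₂⟩ h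
  obtain ⟨hτ, ha⟩ : padNone τ₁ = (padNone τ₂ : Fin (n + 1) → Option α) ∧
      padNone a₁ = (padNone a₂ : Fin n → Option β) := Prod.mk.inj h
  have hlen (k : Fin (n + 1)) : (m₁ : ℕ) + 1 ≤ k ↔ (m₂ : ℕ) + 1 ≤ k := by
    rw [← padNone_eq_none_iff (f := τ₁), ← padNone_eq_none_iff (f := τ₂), hτ]
  obtain rfl : m₁ = m₂ := by
    have := hlen m₁
    have := hlen m₂
    omega
  rw [padNone_injective (by omega) hτ, padNone_injective (by omega) ha]

end Padding

section PaddedMDP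

variable {S A : Type*}

/-- `q(τ) e^{R(τ)}` for a trajectory with `m + 1` states. -/
noncomputable def trajWeight (p0 : S → ℝ) (T : S → A → S → ℝ) (γ : ℝ) (R1 : S → ℝ)
    (R2 : S → A → ℝ) (R3 : S → A → S → ℝ) {m : ℕ} (σ : Fin (m + 1) → S) (a : Fin m → A) : ℝ :=
  p0 (σ 0) * (∏ k : Fin m, T (σ k.castSucc) (a k) (σ k.succ)) *
    Real.exp ((∑ k : Fin (m + 1), γ ^ (k : ℕ) * R1 (σ k)) +
      ∑ k : Fin m, γ ^ (k : ℕ) * (R2 (σ k.castSucc) (a k) + R3 (σ k.castSucc) (a k) (σ k.succ)))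

/-- `q⁺(τ) e^{R⁺(τ)}`, the transition rewards entering through the step weights `W`. -/
noncomputable def paddedWeight (p0' : Option S → ℝ) (T' : Option S → Option A → Option S → ℝ)
    (γ : ℝ) (R1' : Option S → ℝ) (W : ℕ → Option S → Option A → Option S → ℝ) {M : ℕ}
    (σ : Fin (M + 1) → Option S) (b : Fin M → Option A) : ℝ :=
  p0' (σ 0) * Real.exp (∑ k : Fin (M + 1), γ ^ (k : ℕ) * R1' (σ k)) *
    ∏ k : Fin M, (T' (σ k.castSucc) (b k) (σ k.succ) * W k (σ k.castSucc) (b k) (σ k.succ))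

variable {ST : Finset S} {T : S → A → S → ℝ} {γ : ℝ} {R2 : S → A → ℝ}
  {R3 : S → A → S → ℝ} {T' : Option S → Option A → Option S → ℝ}
  {W : ℕ → Option S → Option A → Option S → ℝ}

lemma padded_step_some [DecidableEq S] (hterm : ∀ s ∈ ST, ∀ a s', T s a s' = 0)
    (hT1 : ∀ s a s', T' (some s) (some a) (some s') = if s ∈ ST then 0 else T s a s')
    (hW1 : ∀ k s a s', s ∉ ST → W k (some s) (some a) (some s') =
      Real.exp (γ ^ k * (R2 s a + R3 s a s')))
    (k : ℕ) (s : S) (a : A) (s' : S) :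
    T' (some s) (some a) (some s') * W k (some s) (some a) (some s') =
      T s a s' * Real.exp (γ ^ k * (R2 s a + R3 s a s')) := by
  by_cases hs : s ∈ ST
  · simp [hT1, hs, hterm]
  · rw [hT1, if_neg hs, hW1 k s a s' hs]

lemma padded_step_none (hT3 : ∀ s y, T' (some s) none y = if y = none then 1 else 0)
    (hT4 : ∀ b y, T' none b y = if y = none then 1 else 0) (hW2 : ∀ k x, W k x none none = 1)
    (k : ℕ) (x : Option S) : T' x none none * W k x none none = 1 := by
  cases x <;> simp [hT3, hT4, hW2]

lemma padded_step_ne_zero (hT3 : ∀ s y, T' (some s) none y = if y = none then 1 else 0)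
    (hT4 : ∀ b y, T' none b y = if y = none then 1 else 0)
    (hW0 : ∀ k x b y, ¬((b = none ∧ y = none) ∨
      (∃ s a s', x = some s ∧ b = some a ∧ y = some s' ∧ s ∉ ST)) → W k x b y = 0)
    {k : ℕ} {x : Option S} {b : Option A} {y : Option S} (h : T' x b y * W k x b y ≠ 0) :
    (x = none → y = none) ∧ (b = none ↔ y = none) := by
  obtain ⟨hT, hW⟩ := mul_ne_zero_iff.1 h
  have hxy : x = none → y = none := by
    rintro rfl
    simpa [hT4] using hT
  refine ⟨hxy, fun hb ↦ ?_, fun hy ↦ ?_⟩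
  · subst hb
    cases x with
    | none => exact hxy rfl
    | some s => simpa [hT3] using hT
  · by_contra hb
    exact hW (hW0 k x b y (by simp [hb, hy]))

lemma paddedWeight_padNone [DecidableEq S] {p0 : S → ℝ} {R1 : S → ℝ} {p0' : Option S → ℝ}
    {R1' : Option S → ℝ} (hterm : ∀ s ∈ ST, ∀ a s', T s a s' = 0)
    (hp0s : ∀ s, p0' (some s) = p0 s) (hR1s : ∀ s, R1' (some s) = R1 s) (hR1a : R1' none = 0)
    (hT1 : ∀ s a s', T' (some s) (some a) (some s') = if s ∈ ST then 0 else T s a s')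
    (hT3 : ∀ s y, T' (some s) none y = if y = none then 1 else 0)
    (hT4 : ∀ b y, T' none b y = if y = none then 1 else 0)
    (hW1 : ∀ k s a s', s ∉ ST → W k (some s) (some a) (some s') =
      Real.exp (γ ^ k * (R2 s a + R3 s a s')))
    (hW2 : ∀ k x, W k x none none = 1)
    {m M : ℕ} (hm : m ≤ M) (σ : Fin (m + 1) → S) (a : Fin m → A) :
    paddedWeight p0' T' γ R1' W (M := M) (padNone σ) (padNone a) =
      trajWeight p0 T γ R1 R2 R3 σ a := by
  have hinit : p0' (padNone σ (0 : Fin (M + 1))) = p0 (σ 0) := by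
    rw [padNone_zero, hp0s]
  have hrewards : ∑ k : Fin (M + 1), γ ^ (k : ℕ) * R1' (padNone σ k) =
      ∑ k : Fin (m + 1), γ ^ (k : ℕ) * R1 (σ k) := by
    refine (Fintype.sum_of_injective _ (Fin.castLE_injective (by omega)) _ _ (fun k hk ↦ ?_)
      fun k ↦ ?_).symm
    · simp only [Fin.range_castLE, Set.mem_ofPred_eq, not_lt] at hk
      rw [padNone_of_le hk, hR1a, mul_zero]
    · simp [hR1s]
  have hsteps : ∏ k : Fin M, (T' (padNone σ k.castSucc) (padNone a k) (padNone σ k.succ) *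
        W k (padNone σ k.castSucc) (padNone a k) (padNone σ k.succ)) =
      ∏ k : Fin m, T (σ k.castSucc) (a k) (σ k.succ) * Real.exp
        (γ ^ (k : ℕ) * (R2 (σ k.castSucc) (a k) + R3 (σ k.castSucc) (a k) (σ k.succ))) := by
    refine (Fintype.prod_of_injective _ (Fin.castLE_injective hm) _ _ (fun k hk ↦ ?_)
      fun k ↦ ?_).symm
    · simp only [Fin.range_castLE, Set.mem_ofPred_eq, not_lt] at hk
      rw [padNone_of_le (f := a) hk, padNone_of_le (f := σ) (k := k.succ) (by simpa using hk),
        padded_step_none hT3 hT4 hW2]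
    · rw [show (k.castLE hm).castSucc = k.castSucc.castLE (by omega) from rfl,
        show (k.castLE hm).succ = k.succ.castLE (by omega) from rfl, padNone_castLE,
        padNone_castLE, padNone_castLE, padded_step_some hterm hT1 hW1, Fin.val_castLE]
  rw [paddedWeight, trajWeight, hinit, hrewards, hsteps, prod_mul_distrib,
    ← Real.exp_sum, Real.exp_add]
  ring

lemma exists_padNone_of_paddedWeight_ne_zero {p0' : Option S → ℝ} {R1' : Option S → ℝ}
    (hp0a : p0' none = 0)
    (hT3 : ∀ s y, T' (some s) none y = if y = none then 1 else 0)
    (hT4 : ∀ b y, T' none b y = if y = none then 1 else 0)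
    (hW0 : ∀ k x b y, ¬((b = none ∧ y = none) ∨
      (∃ s a s', x = some s ∧ b = some a ∧ y = some s' ∧ s ∉ ST)) → W k x b y = 0)
    {M : ℕ} {σ : Fin (M + 1) → Option S} {b : Fin M → Option A}
    (h : paddedWeight p0' T' γ R1' W σ b ≠ 0) :
    ∃ (m : Fin (M + 1)) (τ : Fin (m + 1) → S) (a : Fin m → A),
      padNone τ = σ ∧ padNone a = b := by
  obtain ⟨⟨hinit, -⟩, hsteps⟩ := mul_ne_zero_iff.1 h |>.imp_left mul_ne_zero_iff.1
  have hstep (k : Fin M) := padded_step_ne_zero hT3 hT4 hW0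
    (prod_ne_zero_iff.1 hsteps k (mem_univ k))
  exact exists_padNone_pair_eq (fun h0 ↦ hinit (by rw [h0, hp0a])) (fun k ↦ (hstep k).1)
    fun k ↦ (hstep k).2

theorem sum_paddedWeight_eq_sum_trajWeight [Fintype S] [Fintype A] [DecidableEq S]
    {p0 : S → ℝ} {R1 : S → ℝ} {p0' : Option S → ℝ} {R1' : Option S → ℝ}
    (hterm : ∀ s ∈ ST, ∀ a s', T s a s' = 0)
    (hp0s : ∀ s, p0' (some s) = p0 s) (hp0a : p0' none = 0)
    (hR1s : ∀ s, R1' (some s) = R1 s) (hR1a : R1' none = 0)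
    (hT1 : ∀ s a s', T' (some s) (some a) (some s') = if s ∈ ST then 0 else T s a s')
    (hT3 : ∀ s y, T' (some s) none y = if y = none then 1 else 0)
    (hT4 : ∀ b y, T' none b y = if y = none then 1 else 0)
    (hW1 : ∀ k s a s', s ∉ ST → W k (some s) (some a) (some s') =
      Real.exp (γ ^ k * (R2 s a + R3 s a s')))
    (hW2 : ∀ k x, W k x none none = 1)
    (hW0 : ∀ k x b y, ¬((b = none ∧ y = none) ∨
      (∃ s a s', x = some s ∧ b = some a ∧ y = some s' ∧ s ∉ ST)) → W k x b y = 0) (M : ℕ) :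
    ∑ σ : Fin (M + 1) → Option S, ∑ b : Fin M → Option A, paddedWeight p0' T' γ R1' W σ b =
      ∑ m ∈ Finset.range (M + 1), ∑ σ : Fin (m + 1) → S, ∑ a : Fin m → A,
        trajWeight p0 T γ R1 R2 R3 σ a := by
  rw [← Fin.sum_univ_eq_sum_range (fun m ↦ ∑ σ : Fin (m + 1) → S, ∑ a : Fin m → A,
      trajWeight p0 T γ R1 R2 R3 σ a), ← Fintype.sum_prod_type']
  simp only [← Fintype.sum_prod_type' (fun σ a ↦ trajWeight p0 T γ R1 R2 R3 σ a)]
  rw [← Fintype.sum_sigma (fun x : Σ m : Fin (M + 1), (Fin (m + 1) → S) × (Fin m → A) ↦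
    trajWeight p0 T γ R1 R2 R3 x.2.1 x.2.2)]
  refine (Fintype.sum_of_injective _ padNone_sigma_injective _ _ (fun y hy ↦ ?_) fun x ↦ ?_).symm
  · by_contra h
    obtain ⟨m, τ, a, hτ, ha⟩ := exists_padNone_of_paddedWeight_ne_zero hp0a hT3 hT4 hW0 h
    exact hy ⟨⟨m, τ, a⟩, Prod.ext hτ ha⟩
  · exact (paddedWeight_padNone hterm hp0s hR1s hR1a hT1 hT3 hT4 hW1 hW2
      (Nat.lt_succ_iff.1 x.1.isLt) _ _).symm

end PaddedMDP

/-- The padded MDP has states `Option S` and actions `Option A`, with `none` playing the auxiliary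
state `s_a` and action `a_a`; a forbidden transition (reward `−∞`) has step weight `W = 0`. -/
theorem padding_invariance_general {S A : Type*} [Fintype S] [Fintype A]
    [DecidableEq S]
    (ST : Finset S)  -- terminal states
    (p0 : S → ℝ) (T : S → A → S → ℝ) (γ : ℝ)
    (R1 : S → ℝ) (R2 : S → A → ℝ) (R3 : S → A → S → ℝ)
    (hterm : ∀ s ∈ ST, ∀ a s', T s a s' = 0)  -- terminal states end the episode
    (M : ℕ)
    -- padded initial distribution
    (p0' : Option S → ℝ)
    (hp0s : ∀ s, p0' (some s) = p0 s) (hp0a : p0' none = 0)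
    -- padded state rewards
    (R1' : Option S → ℝ)
    (hR1s : ∀ s, R1' (some s) = R1 s) (hR1a : R1' none = 0)
    -- padded transition dynamics
    (T' : Option S → Option A → Option S → ℝ)
    (hT1 : ∀ s a s', T' (some s) (some a) (some s') = if s ∈ ST then 0 else T s a s')
    (hT3 : ∀ s y, T' (some s) none y = if y = none then 1 else 0)
    (hT4 : ∀ b y, T' none b y = if y = none then 1 else 0)
    -- padded per-step exponentiated state-action / transition reward weights
    (W : ℕ → Option S → Option A → Option S → ℝ)
    (hW1 : ∀ k s a s', s ∉ ST → W k (some s) (some a) (some s') =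
      Real.exp (γ ^ k * (R2 s a + R3 s a s')))
    (hW2 : ∀ k x, W k x none none = 1)
    (hW0 : ∀ k x b y,
      ¬((b = none ∧ y = none) ∨
        (∃ s a s', x = some s ∧ b = some a ∧ y = some s' ∧ s ∉ ST)) →
      W k x b y = 0) :
    (∀ (m : ℕ) (hm : m ≤ M) (σ : Fin (m + 1) → S) (a : Fin m → A),
      (∀ k : Fin m, σ k.castSucc ∉ ST) →
      (p0' (if h : (0 : ℕ) < m + 1 then some (σ ⟨0, h⟩) else none) *
        Real.exp (∑ k : Fin (M + 1), γ ^ (k : ℕ) *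
          R1' (if h : (k : ℕ) < m + 1 then some (σ ⟨k, h⟩) else none)) *
        ∏ k : Fin M,
          (T' (if h : (k.castSucc : ℕ) < m + 1 then some (σ ⟨k.castSucc, h⟩) else none)
              (if h : (k : ℕ) < m then some (a ⟨k, h⟩) else none)
              (if h : (k.succ : ℕ) < m + 1 then some (σ ⟨k.succ, h⟩) else none) *
            W k (if h : (k.castSucc : ℕ) < m + 1 then some (σ ⟨k.castSucc, h⟩) else none)
              (if h : (k : ℕ) < m then some (a ⟨k, h⟩) else none)
              (if h : (k.succ : ℕ) < m + 1 then some (σ ⟨k.succ, h⟩) else none)))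
      = p0 (σ 0) * (∏ k : Fin m, T (σ k.castSucc) (a k) (σ k.succ)) *
          Real.exp ((∑ k : Fin (m + 1), γ ^ (k : ℕ) * R1 (σ k)) +
            ∑ k : Fin m, γ ^ (k : ℕ) *
              (R2 (σ k.castSucc) (a k) + R3 (σ k.castSucc) (a k) (σ k.succ))))
    ∧
    (∑ σ : Fin (M + 1) → Option S, ∑ b : Fin M → Option A,
        p0' (σ 0) * Real.exp (∑ k : Fin (M + 1), γ ^ (k : ℕ) * R1' (σ k)) *
          ∏ k : Fin M, (T' (σ k.castSucc) (b k) (σ k.succ) *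
            W k (σ k.castSucc) (b k) (σ k.succ))
      = ∑ m ∈ Finset.range (M + 1), ∑ σ : Fin (m + 1) → S, ∑ a : Fin m → A,
          p0 (σ 0) * (∏ k : Fin m, T (σ k.castSucc) (a k) (σ k.succ)) *
            Real.exp ((∑ k : Fin (m + 1), γ ^ (k : ℕ) * R1 (σ k)) +
              ∑ k : Fin m, γ ^ (k : ℕ) *
                (R2 (σ k.castSucc) (a k) + R3 (σ k.castSucc) (a k) (σ k.succ)))) := by
  refine ⟨fun m hm σ a _ ↦ paddedWeight_padNone hterm hp0s hR1s hR1a hT1 hT3 hT4 hW1 hW2 hm σ a,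
    ?_⟩
  exact sum_paddedWeight_eq_sum_trajWeight hterm hp0s hp0a hR1s hR1a hT1 hT3 hT4 hW1 hW2 hW0 M

/-- Padding invariance.  The padded MDP uses states `Option S` (with `none` the
auxiliary state `s_a`) and actions `Option A` (with `none` the auxiliary action
`a_a`).  Forbidden transitions (reward −∞) are encoded by per-step exponential
weights `W` equal to 0.  Part 1: for a trajectory `τ` of length `m+1 ≤ M+1` in the
original episodic MDP (no non-final state terminal), padding it with `(a_a, s_a)`
pairs up to length `M+1` preserves the weight: `q⁺(τ⁺)·e^{R⁺(τ⁺)} = q(τ)·e^{R(τ)}`.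
Part 2: consequently, the partition function over fixed-length padded trajectories
equals the partition function over variable-length original trajectories. -/
theorem padding_invariance {S A : Type*} [Fintype S] [Fintype A]
    [DecidableEq S] [DecidableEq A]
    (ST : Finset S)  -- terminal states
    (p0 : S → ℝ) (T : S → A → S → ℝ) (γ : ℝ)
    (R1 : S → ℝ) (R2 : S → A → ℝ) (R3 : S → A → S → ℝ)
    (hterm : ∀ s ∈ ST, ∀ a s', T s a s' = 0)  -- terminal states end the episode
    (M : ℕ)
    -- padded initial distribution
    (p0' : Option S → ℝ)
    (hp0s : ∀ s, p0' (some s) = p0 s) (hp0a : p0' none = 0)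
    -- padded state rewards
    (R1' : Option S → ℝ)
    (hR1s : ∀ s, R1' (some s) = R1 s) (hR1a : R1' none = 0)
    -- padded transition dynamics
    (T' : Option S → Option A → Option S → ℝ)
    (hT1 : ∀ s a s', T' (some s) (some a) (some s') = if s ∈ ST then 0 else T s a s')
    (hT2 : ∀ s a, T' (some s) (some a) none = if s ∈ ST then 1 else 0)
    (hT3 : ∀ s y, T' (some s) none y = if y = none then 1 else 0)
    (hT4 : ∀ b y, T' none b y = if y = none then 1 else 0)
    -- padded per-step exponentiated state-action / transition reward weights
    (W : ℕ → Option S → Option A → Option S → ℝ)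
    (hW1 : ∀ k s a s', s ∉ ST → W k (some s) (some a) (some s') =
      Real.exp (γ ^ k * (R2 s a + R3 s a s')))
    (hW2 : ∀ k x, W k x none none = 1)
    (hW0 : ∀ k x b y,
      ¬((b = none ∧ y = none) ∨
        (∃ s a s', x = some s ∧ b = some a ∧ y = some s' ∧ s ∉ ST)) →
      W k x b y = 0) :
    (∀ (m : ℕ) (hm : m ≤ M) (σ : Fin (m + 1) → S) (a : Fin m → A),
      (∀ k : Fin m, σ k.castSucc ∉ ST) →
      (p0' (if h : (0 : ℕ) < m + 1 then some (σ ⟨0, h⟩) else none) *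
        Real.exp (∑ k : Fin (M + 1), γ ^ (k : ℕ) *
          R1' (if h : (k : ℕ) < m + 1 then some (σ ⟨k, h⟩) else none)) *
        ∏ k : Fin M,
          (T' (if h : (k.castSucc : ℕ) < m + 1 then some (σ ⟨k.castSucc, h⟩) else none)
              (if h : (k : ℕ) < m then some (a ⟨k, h⟩) else none)
              (if h : (k.succ : ℕ) < m + 1 then some (σ ⟨k.succ, h⟩) else none) *
            W k (if h : (k.castSucc : ℕ) < m + 1 then some (σ ⟨k.castSucc, h⟩) else none)
              (if h : (k : ℕ) < m then some (a ⟨k, h⟩) else none)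
              (if h : (k.succ : ℕ) < m + 1 then some (σ ⟨k.succ, h⟩) else none)))
      = p0 (σ 0) * (∏ k : Fin m, T (σ k.castSucc) (a k) (σ k.succ)) *
          Real.exp ((∑ k : Fin (m + 1), γ ^ (k : ℕ) * R1 (σ k)) +
            ∑ k : Fin m, γ ^ (k : ℕ) *
              (R2 (σ k.castSucc) (a k) + R3 (σ k.castSucc) (a k) (σ k.succ))))
    ∧
    (∑ σ : Fin (M + 1) → Option S, ∑ b : Fin M → Option A,
        p0' (σ 0) * Real.exp (∑ k : Fin (M + 1), γ ^ (k : ℕ) * R1' (σ k)) *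
          ∏ k : Fin M, (T' (σ k.castSucc) (b k) (σ k.succ) *
            W k (σ k.castSucc) (b k) (σ k.succ))
      = ∑ m ∈ Finset.range (M + 1), ∑ σ : Fin (m + 1) → S, ∑ a : Fin m → A,
          p0 (σ 0) * (∏ k : Fin m, T (σ k.castSucc) (a k) (σ k.succ)) *
            Real.exp ((∑ k : Fin (m + 1), γ ^ (k : ℕ) * R1 (σ k)) +
              ∑ k : Fin m, γ ^ (k : ℕ) *
                (R2 (σ k.castSucc) (a k) + R3 (σ k.castSucc) (a k) (σ k.succ)))) :=
  padding_invariance_general ST p0 T γ R1 R2 R3 hterm M p0' hp0s hp0a R1' hR1s hR1a T' hT1 hT3 hT4 W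
    hW1 hW2 hW0
end

section
/- In the padded formulation, for 1 ≤ t ≤ L−1 and s ∈ S, a ∈ A, s' ∈ S, the marginal p_t(s,a,s') computed as (1/Z)·α_t(s)·T(s'|s,a)·exp(γ^{t−1}R(s,a)+γ^{t−1}R(s,a,s'))·β_{L−t}(s') (using fixed-length-L backward messages β) equals the variable-length marginal (1/Z)·α_t(s)·T(s'|s,a)·exp(γ^{t−1}R(s,a)+γ^{t−1}R(s,a,s'))·∑_{l=t+1}^{L} β_{l,l−t}(s') computed without padding. -/
/-!
Read the padded backward message with `u` steps left at absolute time `τ = L - u`. From an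
original state the padded MDP may either step inside the original MDP or jump to the
auxiliary state, which then loops with weight `1` until the horizon `L`. Jumping at time `τ`
contributes `exp (γ ^ τ * R1 x)`, exactly the first backward message of the unpadded
trajectory of length `τ + 1`; stepping applies the common one-step backup. Hence the padded
message and the sum over all remaining horizons `l` of the unpadded messages `β l (l - τ)`
satisfy the same backward recursion, and they agree by downward induction on `τ`.
-/

open Finset

section Backup

variable {S A : Type*} [Fintype S] [Fintype A]
  (T : S → A → S → ℝ) (γ : ℝ) (R1 : S → ℝ) (R2 : S → A → ℝ) (R3 : S → A → S → ℝ)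

noncomputable def stopOrStep (τ : ℕ) (g : S → ℝ) (x : S) : ℝ :=
  Real.exp (γ ^ τ * R1 x) +
    ∑ a, ∑ y, T x a y * Real.exp (γ ^ τ * (R1 x + R2 x a + R3 x a y)) * g y

@[simp]
lemma stopOrStep_zero (τ : ℕ) (x : S) :
    stopOrStep T γ R1 R2 R3 τ 0 x = Real.exp (γ ^ τ * R1 x) := by
  simp [stopOrStep]

def horizonSum (β : ℕ → ℕ → S → ℝ) (L τ : ℕ) (x : S) : ℝ :=
  ∑ l ∈ Icc (τ + 1) L, β l (l - τ) x

omit [Fintype S] in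
@[simp]
lemma horizonSum_self (β : ℕ → ℕ → S → ℝ) (L : ℕ) : horizonSum β L L = 0 := by
  ext x
  simp [horizonSum]

variable {T γ R1 R2 R3}

lemma horizonSum_eq_stopOrStep {β : ℕ → ℕ → S → ℝ}
    (hβbase : ∀ l, 1 ≤ l → ∀ s, β l 1 s = Real.exp (γ ^ (l - 1) * R1 s))
    (hβrec : ∀ l t, 1 ≤ t → t + 1 ≤ l → ∀ s, β l (t + 1) s =
      ∑ a, ∑ s', T s a s' *
        Real.exp (γ ^ (l - t - 1) * (R1 s + R2 s a + R3 s a s')) * β l t s')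
    {L τ : ℕ} (hτ : τ < L) (x : S) :
    horizonSum β L τ x = stopOrStep T γ R1 R2 R3 τ (horizonSum β L (τ + 1)) x := by
  have hshift : ∀ l ∈ Ioc (τ + 1) L, β l (l - τ) x =
      ∑ a, ∑ y, T x a y * Real.exp (γ ^ τ * (R1 x + R2 x a + R3 x a y)) *
        β l (l - (τ + 1)) y := by
    intro l hl
    rw [mem_Ioc] at hl
    rw [show l - τ = l - (τ + 1) + 1 by omega, hβrec l _ (by omega) (by omega),
      show l - (l - (τ + 1)) - 1 = τ by omega]
  rw [horizonSum, ← add_sum_Ioc_eq_sum_Icc (by omega), add_tsub_cancel_left,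
    hβbase _ (by omega), add_tsub_cancel_right, sum_congr rfl hshift, sum_comm, stopOrStep]
  congr 1
  refine sum_congr rfl fun a _ => ?_
  rw [sum_comm]
  refine sum_congr rfl fun y _ => ?_
  rw [horizonSum, Icc_add_one_left_eq_Ioc, mul_sum]

end Backup

/-- The padding of an MDP with terminal states `ST`: padded states are `Option S` and padded
actions `Option A`, with `none` the auxiliary state and action. Forbidden transitions (reward
`-∞`) are encoded by the per-step weight `W k = 0`, where `k` is the discount exponent. -/
structure IsPadding {S A : Type*} [DecidableEq S] (ST : Finset S) (T : S → A → S → ℝ) (γ : ℝ)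
    (R1 : S → ℝ) (R2 : S → A → ℝ) (R3 : S → A → S → ℝ) (R1' : Option S → ℝ)
    (T' : Option S → Option A → Option S → ℝ) (W : ℕ → Option S → Option A → Option S → ℝ) :
    Prop where
  reward_some : ∀ s, R1' (some s) = R1 s
  reward_none : R1' none = 0
  trans_some : ∀ s a s', T' (some s) (some a) (some s') = if s ∈ ST then 0 else T s a s'
  trans_stop : ∀ s y, T' (some s) none y = if y = none then 1 else 0
  trans_aux : ∀ b y, T' none b y = if y = none then 1 else 0
  weight_some : ∀ k s a s', s ∉ ST → W k (some s) (some a) (some s') =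
    Real.exp (γ ^ k * (R2 s a + R3 s a s'))
  weight_stop : ∀ k x, W k x none none = 1
  weight_forbidden : ∀ k x b y,
    ¬((b = none ∧ y = none) ∨ (∃ s a s', x = some s ∧ b = some a ∧ y = some s' ∧ s ∉ ST)) →
    W k x b y = 0

namespace IsPadding

variable {S A : Type*} [Fintype S] [Fintype A] [DecidableEq S]
  {ST : Finset S} {T : S → A → S → ℝ} {γ : ℝ}
  {R1 : S → ℝ} {R2 : S → A → ℝ} {R3 : S → A → S → ℝ} {R1' : Option S → ℝ}
  {T' : Option S → Option A → Option S → ℝ} {W : ℕ → Option S → Option A → Option S → ℝ}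

lemma step_none (hP : IsPadding ST T γ R1 R2 R3 R1' T' W) (k : ℕ) (g : Option S → ℝ) :
    ∑ b, ∑ y, T' none b y * Real.exp (γ ^ k * R1' none) * W k none b y * g y = g none := by
  have hforbid : ∀ a, W k none (some a) none = 0 := fun a =>
    hP.weight_forbidden _ _ _ _ (by simp)
  simp [Fintype.sum_option, hP.trans_aux, hP.reward_none, hP.weight_stop, hforbid]

lemma step_some (hP : IsPadding ST T γ R1 R2 R3 R1' T' W)
    (hterm : ∀ s ∈ ST, ∀ a s', T s a s' = 0) (k : ℕ) (g : Option S → ℝ) (x : S) :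
    ∑ b, ∑ y, T' (some x) b y * Real.exp (γ ^ k * R1' (some x)) * W k (some x) b y * g y
      = Real.exp (γ ^ k * R1 x) * g none +
        ∑ a, ∑ y, T x a y * Real.exp (γ ^ k * (R1 x + R2 x a + R3 x a y)) * g (some y) := by
  have hforbid : ∀ a, W k (some x) (some a) none = 0 := fun a =>
    hP.weight_forbidden _ _ _ _ (by simp)
  have hstep : ∀ a y, T' (some x) (some a) (some y) * Real.exp (γ ^ k * R1 x) *
      W k (some x) (some a) (some y) =
      T x a y * Real.exp (γ ^ k * (R1 x + R2 x a + R3 x a y)) := by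
    intro a y
    by_cases hx : x ∈ ST
    · simp [hP.trans_some, hx, hterm x hx]
    · rw [hP.trans_some, if_neg hx, hP.weight_some _ _ _ _ hx, mul_assoc, ← Real.exp_add,
        ← mul_add, add_assoc]
  simp [Fintype.sum_option, hP.trans_stop, hP.reward_some, hP.weight_stop, hforbid, hstep]

variable {L : ℕ} {βp : ℕ → Option S → ℝ}

lemma backward_none (hP : IsPadding ST T γ R1 R2 R3 R1' T' W)
    (hpbase : ∀ x, βp 1 x = Real.exp (γ ^ (L - 1) * R1' x))
    (hprec : ∀ t, 1 ≤ t → t + 1 ≤ L → ∀ x, βp (t + 1) x =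
      ∑ b, ∑ y, T' x b y * Real.exp (γ ^ (L - t - 1) * R1' x) *
        W (L - t - 1) x b y * βp t y)
    {u : ℕ} (hu : 1 ≤ u) (huL : u ≤ L) : βp u none = 1 := by
  induction u, hu using Nat.le_induction with
  | base => simp [hpbase, hP.reward_none]
  | succ n hn ih => rw [hprec n hn huL, hP.step_none, ih (by omega)]

lemma backward_some (hP : IsPadding ST T γ R1 R2 R3 R1' T' W)
    (hterm : ∀ s ∈ ST, ∀ a s', T s a s' = 0)
    {β : ℕ → ℕ → S → ℝ}
    (hβbase : ∀ l, 1 ≤ l → ∀ s, β l 1 s = Real.exp (γ ^ (l - 1) * R1 s))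
    (hβrec : ∀ l t, 1 ≤ t → t + 1 ≤ l → ∀ s, β l (t + 1) s =
      ∑ a, ∑ s', T s a s' *
        Real.exp (γ ^ (l - t - 1) * (R1 s + R2 s a + R3 s a s')) * β l t s')
    (hpbase : ∀ x, βp 1 x = Real.exp (γ ^ (L - 1) * R1' x))
    (hprec : ∀ t, 1 ≤ t → t + 1 ≤ L → ∀ x, βp (t + 1) x =
      ∑ b, ∑ y, T' x b y * Real.exp (γ ^ (L - t - 1) * R1' x) *
        W (L - t - 1) x b y * βp t y)
    {u : ℕ} (hu : 1 ≤ u) (huL : u ≤ L) (x : S) :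
    βp u (some x) = horizonSum β L (L - u) x := by
  induction u, hu using Nat.le_induction generalizing x with
  | base =>
    rw [hpbase, hP.reward_some, horizonSum_eq_stopOrStep hβbase hβrec (by omega),
      Nat.sub_add_cancel (by omega), horizonSum_self, stopOrStep_zero]
  | succ n hn ih =>
    have hτ : L - (n + 1) + 1 = L - n := by omega
    rw [hprec n hn huL, hP.step_some hterm, hP.backward_none hpbase hprec hn (by omega),
      horizonSum_eq_stopOrStep hβbase hβrec (by omega), hτ, stopOrStep, mul_one,
      show L - n - 1 = L - (n + 1) by omega]
    simp only [ih (by omega)]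

end IsPadding

theorem padded_marginal_eq_variable_length_marginal_general {S A : Type*} [Fintype S] [Fintype A]
    [DecidableEq S]
    (ST : Finset S)
    (T : S → A → S → ℝ) (γ : ℝ)
    (R1 : S → ℝ) (R2 : S → A → ℝ) (R3 : S → A → S → ℝ)
    (hterm : ∀ s ∈ ST, ∀ a s', T s a s' = 0)
    (L : ℕ)
    -- unpadded (variable-length) backward messages
    (β : ℕ → ℕ → S → ℝ)
    (hβbase : ∀ l, 1 ≤ l → ∀ s, β l 1 s = Real.exp (γ ^ (l - 1) * R1 s))
    (hβrec : ∀ l t, 1 ≤ t → t + 1 ≤ l → ∀ s, β l (t + 1) s =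
      ∑ a, ∑ s', T s a s' *
        Real.exp (γ ^ (l - t - 1) * (R1 s + R2 s a + R3 s a s')) * β l t s')
    -- padded rewards and dynamics
    (R1' : Option S → ℝ)
    (hR1s : ∀ s, R1' (some s) = R1 s) (hR1a : R1' none = 0)
    (T' : Option S → Option A → Option S → ℝ)
    (hT1 : ∀ s a s', T' (some s) (some a) (some s') = if s ∈ ST then 0 else T s a s')
    (hT3 : ∀ s y, T' (some s) none y = if y = none then 1 else 0)
    (hT4 : ∀ b y, T' none b y = if y = none then 1 else 0)
    (W : ℕ → Option S → Option A → Option S → ℝ)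
    (hW1 : ∀ k s a s', s ∉ ST → W k (some s) (some a) (some s') =
      Real.exp (γ ^ k * (R2 s a + R3 s a s')))
    (hW2 : ∀ k x, W k x none none = 1)
    (hW0 : ∀ k x b y,
      ¬((b = none ∧ y = none) ∨
        (∃ s a s', x = some s ∧ b = some a ∧ y = some s' ∧ s ∉ ST)) →
      W k x b y = 0)
    -- padded (fixed-length-L) backward messages
    (βp : ℕ → Option S → ℝ)
    (hpbase : ∀ x, βp 1 x = Real.exp (γ ^ (L - 1) * R1' x))
    (hprec : ∀ t, 1 ≤ t → t + 1 ≤ L → ∀ x, βp (t + 1) x =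
      ∑ b, ∑ y, T' x b y * Real.exp (γ ^ (L - t - 1) * R1' x) *
        W (L - t - 1) x b y * βp t y)
    -- common forward messages and partition value
    (α : ℕ → S → ℝ) (Z : ℝ)
    (t : ℕ) (ht1 : 1 ≤ t) (ht2 : t ≤ L - 1) (s : S) (a : A) (s' : S) :
    (1 / Z) * α t s * T s a s' *
        Real.exp (γ ^ (t - 1) * R2 s a + γ ^ (t - 1) * R3 s a s') *
        βp (L - t) (some s')
      = (1 / Z) * α t s * T s a s' *
          Real.exp (γ ^ (t - 1) * R2 s a + γ ^ (t - 1) * R3 s a s') *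
          ∑ l ∈ Finset.Icc (t + 1) L, β l (l - t) s' := by
  have hP : IsPadding ST T γ R1 R2 R3 R1' T' W :=
    ⟨hR1s, hR1a, hT1, hT3, hT4, hW1, hW2, hW0⟩
  rw [hP.backward_some hterm hβbase hβrec hpbase hprec (by omega) (by omega),
    Nat.sub_sub_self (by omega), horizonSum]

/-- Padded/unpadded marginal equality: for `1 ≤ t ≤ L−1`, the transition marginal
computed with the fixed-length-`L` padded backward messages `βp` equals the
variable-length marginal computed with the unpadded backward messages `β`.
Padded states are `Option S` (`none` = auxiliary state), padded actions `Option A`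
(`none` = auxiliary action), and forbidden transitions (reward −∞) have per-step
weight `W = 0`. -/
theorem padded_marginal_eq_variable_length_marginal {S A : Type*} [Fintype S] [Fintype A]
    [DecidableEq S] [DecidableEq A]
    (ST : Finset S)
    (T : S → A → S → ℝ) (γ : ℝ)
    (R1 : S → ℝ) (R2 : S → A → ℝ) (R3 : S → A → S → ℝ)
    (hterm : ∀ s ∈ ST, ∀ a s', T s a s' = 0)
    (L : ℕ)
    -- unpadded (variable-length) backward messages
    (β : ℕ → ℕ → S → ℝ)
    (hβbase : ∀ l, 1 ≤ l → ∀ s, β l 1 s = Real.exp (γ ^ (l - 1) * R1 s))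
    (hβrec : ∀ l t, 1 ≤ t → t + 1 ≤ l → ∀ s, β l (t + 1) s =
      ∑ a, ∑ s', T s a s' *
        Real.exp (γ ^ (l - t - 1) * (R1 s + R2 s a + R3 s a s')) * β l t s')
    -- padded rewards and dynamics
    (R1' : Option S → ℝ)
    (hR1s : ∀ s, R1' (some s) = R1 s) (hR1a : R1' none = 0)
    (T' : Option S → Option A → Option S → ℝ)
    (hT1 : ∀ s a s', T' (some s) (some a) (some s') = if s ∈ ST then 0 else T s a s')
    (hT2 : ∀ s a, T' (some s) (some a) none = if s ∈ ST then 1 else 0)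
    (hT3 : ∀ s y, T' (some s) none y = if y = none then 1 else 0)
    (hT4 : ∀ b y, T' none b y = if y = none then 1 else 0)
    (W : ℕ → Option S → Option A → Option S → ℝ)
    (hW1 : ∀ k s a s', s ∉ ST → W k (some s) (some a) (some s') =
      Real.exp (γ ^ k * (R2 s a + R3 s a s')))
    (hW2 : ∀ k x, W k x none none = 1)
    (hW0 : ∀ k x b y,
      ¬((b = none ∧ y = none) ∨
        (∃ s a s', x = some s ∧ b = some a ∧ y = some s' ∧ s ∉ ST)) →
      W k x b y = 0)
    -- padded (fixed-length-L) backward messages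
    (βp : ℕ → Option S → ℝ)
    (hpbase : ∀ x, βp 1 x = Real.exp (γ ^ (L - 1) * R1' x))
    (hprec : ∀ t, 1 ≤ t → t + 1 ≤ L → ∀ x, βp (t + 1) x =
      ∑ b, ∑ y, T' x b y * Real.exp (γ ^ (L - t - 1) * R1' x) *
        W (L - t - 1) x b y * βp t y)
    -- common forward messages and partition value
    (α : ℕ → S → ℝ) (Z : ℝ) (hZ : Z ≠ 0)
    (t : ℕ) (ht1 : 1 ≤ t) (ht2 : t ≤ L - 1) (s : S) (a : A) (s' : S) :
    (1 / Z) * α t s * T s a s' *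
        Real.exp (γ ^ (t - 1) * R2 s a + γ ^ (t - 1) * R3 s a s') *
        βp (L - t) (some s')
      = (1 / Z) * α t s * T s a s' *
          Real.exp (γ ^ (t - 1) * R2 s a + γ ^ (t - 1) * R3 s a s') *
          ∑ l ∈ Finset.Icc (t + 1) L, β l (l - t) s' :=
  padded_marginal_eq_variable_length_marginal_general ST T γ R1 R2 R3 hterm L β hβbase hβrec R1'
    hR1s hR1a T' hT1 hT3 hT4 W hW1 hW2 hW0 βp hpbase hprec α Z t ht1 ht2 s a s'
end
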